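/- Smooth min-entropy bounded by smooth max-entropy (Lemma 8, exact form): Let ρ be a normalized state on A⊗B (finite-dimensional systems) and α, β ≥ 0 with α + β < π/2. Then H_min^{sin α}(A|B)_ρ ≤ H_max^{sin β}(A|B)_ρ + log₂(1/cos²(α+β)). -/

import Mathlib

open scoped Kronecker ComplexOrder Classical
open Matrix

noncomputable section
namespace Paper

/-- A subnormalized state: positive semidefinite with trace at most one. -/
def IsSubState {A : Type*} [Fintype A] (ρ : Matrix A A ℂ) : Prop :=
  ρ.PosSemidef ∧ ρ.trace.re ≤ 1

/-- A normalized state: positive semidefinite with trace one. -/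
def IsState {A : Type*} [Fintype A] (ρ : Matrix A A ℂ) : Prop :=
  ρ.PosSemidef ∧ ρ.trace = 1

/-- The Löwner order: `ρ ≤ σ` iff `σ - ρ` is positive semidefinite. -/
def LoewnerLE {A : Type*} [Fintype A] (ρ σ : Matrix A A ℂ) : Prop :=
  (σ - ρ).PosSemidef

/-- Square root of a positive semidefinite matrix (junk value `0` otherwise). -/
def matSqrt {A : Type*} [Fintype A] [DecidableEq A] (M : Matrix A A ℂ) : Matrix A A ℂ :=
  if h : M.PosSemidef then
    (h.1.eigenvectorUnitary : Matrix A A ℂ) *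
      Matrix.diagonal (fun i => ((Real.sqrt (h.1.eigenvalues i) : ℝ) : ℂ)) *
      star (h.1.eigenvectorUnitary : Matrix A A ℂ)
  else 0

/-- Fidelity `F(ρ,σ) = tr √(√ρ σ √ρ)`. -/
def fid {A : Type*} [Fintype A] [DecidableEq A] (ρ σ : Matrix A A ℂ) : ℝ :=
  ((matSqrt (matSqrt ρ * σ * matSqrt ρ)).trace).re

/-- Generalized fidelity of subnormalized states. -/
def genFid {A : Type*} [Fintype A] [DecidableEq A] (ρ σ : Matrix A A ℂ) : ℝ :=
  fid ρ σ + Real.sqrt ((1 - ρ.trace.re) * (1 - σ.trace.re))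

/-- Purified distance `P(ρ,σ) = √(1 - F̄(ρ,σ)²)`. -/
def pDist {A : Type*} [Fintype A] [DecidableEq A] (ρ σ : Matrix A A ℂ) : ℝ :=
  Real.sqrt (1 - (genFid ρ σ)^2)

/-- Conditional min-entropy `H_min(A|B)_ρ` for a bipartite (sub)state on `A ⊗ B`. -/
def Hmin {A B : Type*} [Fintype A] [DecidableEq A] [Fintype B] [DecidableEq B]
    (ρ : Matrix (A × B) (A × B) ℂ) : ℝ :=
  sSup {l : ℝ | ∃ σ : Matrix B B ℂ, IsState σ ∧
    LoewnerLE ρ (((2:ℝ) ^ (-l)) • ((1 : Matrix A A ℂ) ⊗ₖ σ))}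

/-- Conditional max-entropy `H_max(A|B)_ρ = 2 log₂ sup_σ F(ρ, 1⊗σ)`. -/
def Hmax {A B : Type*} [Fintype A] [DecidableEq A] [Fintype B] [DecidableEq B]
    (ρ : Matrix (A × B) (A × B) ℂ) : ℝ :=
  2 * Real.logb 2
    (sSup {f : ℝ | ∃ σ : Matrix B B ℂ, IsState σ ∧ f = fid ρ ((1 : Matrix A A ℂ) ⊗ₖ σ)})

/-- Smooth conditional min-entropy. -/
def sHmin {A B : Type*} [Fintype A] [DecidableEq A] [Fintype B] [DecidableEq B]
    (ε : ℝ) (ρ : Matrix (A × B) (A × B) ℂ) : ℝ :=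
  sSup {h : ℝ | ∃ ρ' : Matrix (A × B) (A × B) ℂ,
    IsSubState ρ' ∧ pDist ρ' ρ ≤ ε ∧ h = Hmin ρ'}

/-- Smooth conditional max-entropy. -/
def sHmax {A B : Type*} [Fintype A] [DecidableEq A] [Fintype B] [DecidableEq B]
    (ε : ℝ) (ρ : Matrix (A × B) (A × B) ℂ) : ℝ :=
  sInf {h : ℝ | ∃ ρ' : Matrix (A × B) (A × B) ℂ,
    IsSubState ρ' ∧ pDist ρ' ρ ≤ ε ∧ h = Hmax ρ'}

/-- Partial trace over the second tensor factor. -/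
def ptraceSnd {A B : Type*} [Fintype B] (ρ : Matrix (A × B) (A × B) ℂ) : Matrix A A ℂ :=
  Matrix.of fun a a' => ∑ b, ρ (a, b) (a', b)

/-- Partial trace over the first tensor factor. -/
def ptraceFst {A B : Type*} [Fintype A] (ρ : Matrix (A × B) (A × B) ℂ) : Matrix B B ℂ :=
  Matrix.of fun b b' => ∑ a, ρ (a, b) (a, b')

/-- Von Neumann entropy (base-2), via eigenvalues of a Hermitian matrix. -/
def vN {A : Type*} [Fintype A] [DecidableEq A] (ρ : Matrix A A ℂ) : ℝ :=
  if h : ρ.IsHermitian then -∑ i, (h.eigenvalues i) * Real.logb 2 (h.eigenvalues i) else 0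

/-- Conditional von Neumann entropy `S(A|B)_ρ = S(ρ) - S(ρ^B)`. -/
def condEnt {A B : Type*} [Fintype A] [DecidableEq A] [Fintype B] [DecidableEq B]
    (ρ : Matrix (A × B) (A × B) ℂ) : ℝ :=
  vN ρ - vN (ptraceFst ρ)

/-- The n-fold tensor power of a bipartite state, as a state on `A^n ⊗ B^n`. -/
def powState {A B : Type*} (ρ : Matrix (A × B) (A × B) ℂ) (n : ℕ) :
    Matrix ((Fin n → A) × (Fin n → B)) ((Fin n → A) × (Fin n → B)) ℂ :=
  Matrix.of fun p q => ∏ i, ρ (p.1 i, p.2 i) (q.1 i, q.2 i)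



section Wiretap

variable {𝓧 B E F : Type*} [Fintype 𝓧] [DecidableEq 𝓧]
  [Fintype B] [DecidableEq B] [Fintype E] [DecidableEq E] [Fintype F] [DecidableEq F]

/-- The i.i.d. output state `ρ_{x^n}^{B^n E^n}` on `B^n ⊗ E^n` for input word `xs`. -/
def rhoWord (W : 𝓧 → Matrix (B × E) (B × E) ℂ) {n : ℕ} (xs : Fin n → 𝓧) :
    Matrix ((Fin n → B) × (Fin n → E)) ((Fin n → B) × (Fin n → E)) ℂ :=
  Matrix.of fun p q => ∏ i, W (xs i) (p.1 i, p.2 i) (q.1 i, q.2 i)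

/-- `tr_B [ρ (D ⊗ 1)]` for a bipartite operator `ρ` on `B⊗E` and `D` on `B`. -/
def condOut {BB EE : Type*} [Fintype BB] [Fintype EE]
    (ρ : Matrix (BB × EE) (BB × EE) ℂ) (D : Matrix BB BB ℂ) : Matrix EE EE ℂ :=
  Matrix.of fun e e' => ∑ b, ∑ b', ρ (b, e) (b', e') * D b' b

/-- The reduced state `ρ^{UÛ}` of the code. -/
def rhoUU (W : 𝓧 → Matrix (B × E) (B × E) ℂ) (n M : ℕ)
    (Enc : Fin M → (Fin n → 𝓧) → ℝ)
    (D : Fin M → Matrix (Fin n → B) (Fin n → B) ℂ) :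
    Matrix (Fin M × Fin M) (Fin M × Fin M) ℂ :=
  Matrix.of fun p q => if p = q then
    (M : ℂ)⁻¹ * ∑ xs, (Enc p.1 xs : ℂ) * (condOut (rhoWord W xs) (D p.2)).trace
  else 0

/-- The reduced state `ρ^{U E^n}` of the code. -/
def rhoUE (W : 𝓧 → Matrix (B × E) (B × E) ℂ) (n M : ℕ)
    (Enc : Fin M → (Fin n → 𝓧) → ℝ) :
    Matrix (Fin M × (Fin n → E)) (Fin M × (Fin n → E)) ℂ :=
  Matrix.of fun p q => if p.1 = q.1 then
    (M : ℂ)⁻¹ * ∑ xs, (Enc p.1 xs : ℂ) * (ptraceFst (rhoWord W xs)) p.2 q.2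
  else 0

/-- The maximally correlated state `Δ^{UÛ} = (1/M) ∑_u |u⟩⟨u| ⊗ |u⟩⟨u|`. -/
def DeltaUU (M : ℕ) : Matrix (Fin M × Fin M) (Fin M × Fin M) ℂ :=
  Matrix.of fun p q => if p = q ∧ p.1 = p.2 then (M : ℂ)⁻¹ else 0

/-- `Δ^U ⊗ σ`, with `Δ^U` the maximally mixed state on `Fin M`. -/
def DeltaTensor {EE : Type*} (M : ℕ) (σ : Matrix EE EE ℂ) :
    Matrix (Fin M × EE) (Fin M × EE) ℂ :=
  Matrix.of fun p q => if p.1 = q.1 then (M : ℂ)⁻¹ * σ p.2 q.2 else 0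

/-- An `n`-block wiretap code with `M` messages, transmission error `ε`, privacy error `δ`. -/
def IsCode (W : 𝓧 → Matrix (B × E) (B × E) ℂ) (n M : ℕ) (ε δ : ℝ)
    (Enc : Fin M → (Fin n → 𝓧) → ℝ)
    (D : Fin M → Matrix (Fin n → B) (Fin n → B) ℂ) : Prop :=
  (∀ u, (∀ xs, 0 ≤ Enc u xs) ∧ (∑ xs, Enc u xs) = 1) ∧
  (∀ u, (D u).PosSemidef) ∧ (∑ u, D u) = 1 ∧
  pDist (rhoUU W n M Enc D) (DeltaUU M) ≤ ε ∧
  (∃ σ : Matrix (Fin n → E) (Fin n → E) ℂ, IsState σ ∧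
    pDist (rhoUE W n M Enc) (DeltaTensor M σ) ≤ δ)

/-- `M(n,ε,δ)`: the largest number of messages of an `n`-block code with errors `ε, δ`. -/
def Mmax (W : 𝓧 → Matrix (B × E) (B × E) ℂ) (n : ℕ) (ε δ : ℝ) : ℕ :=
  sSup {M : ℕ | ∃ (Enc : Fin M → (Fin n → 𝓧) → ℝ)
    (D : Fin M → Matrix (Fin n → B) (Fin n → B) ℂ), IsCode W n M ε δ Enc D}

/-- Conditional mutual information `I(X:F|E')` of a state on `X ⊗ ((E'⊗F) ⊗ E)`
(the trailing system `E` is traced out). -/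
def cmi3 {X E F E2 : Type*} [Fintype X] [DecidableEq X] [Fintype E] [DecidableEq E]
    [Fintype F] [DecidableEq F] [Fintype E2]
    (σ : Matrix (X × (E × F) × E2) (X × (E × F) × E2) ℂ) : ℝ :=
  vN (Matrix.of fun (p q : X × E) => ∑ f, ∑ e2, σ (p.1, (p.2, f), e2) (q.1, (q.2, f), e2))
  + vN (Matrix.of fun (p q : E × F) => ∑ x, ∑ e2, σ (x, p, e2) (x, q, e2))
  - vN (Matrix.of fun (e e' : E) => ∑ x, ∑ f, ∑ e2, σ (x, (e, f), e2) (x, (e', f), e2))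
  - vN (Matrix.of fun (p q : X × E × F) => ∑ e2, σ (p.1, p.2, e2) (q.1, q.2, e2))

/-- The state `ρ^{X E' F E} = ∑_x P(x) |x⟩⟨x| ⊗ (V⊗1) ρ_x^{BE} (V⊗1)†`. -/
def rhoXEFE (W : 𝓧 → Matrix (B × E) (B × E) ℂ) (V : Matrix (E × F) B ℂ) (P : 𝓧 → ℝ) :
    Matrix (𝓧 × (E × F) × E) (𝓧 × (E × F) × E) ℂ :=
  Matrix.of fun p q => if p.1 = q.1 then
    (P p.1 : ℂ) *
      ((V ⊗ₖ (1 : Matrix E E ℂ)) * W p.1 * (V ⊗ₖ (1 : Matrix E E ℂ))ᴴ) p.2 q.2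
  else 0

/-- `P*(W) = max_{P_X} I(X:F|E')`. -/
def Pstar (W : 𝓧 → Matrix (B × E) (B × E) ℂ) (V : Matrix (E × F) B ℂ) : ℝ :=
  sSup {r : ℝ | ∃ P : 𝓧 → ℝ, (∀ x, 0 ≤ P x) ∧ (∑ x, P x) = 1 ∧ r = cmi3 (rhoXEFE W V P)}

/-- Degradedness of the wiretap channel `W`, witnessed by a Stinespring
isometry `V : B → E' ⊗ F` of the degrading map. -/
def DegradedVia (W : 𝓧 → Matrix (B × E) (B × E) ℂ) (V : Matrix (E × F) B ℂ) : Prop :=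
  Vᴴ * V = 1 ∧ ∀ x, ptraceSnd (V * ptraceSnd (W x) * Vᴴ) = ptraceFst (W x)

end Wiretap


section Extras

/-- `id_A ⊗ 𝒟` applied to a bipartite operator, for `𝒟` given by Kraus operators `K i`. -/
def idChan {A B C ι : Type*} [Fintype ι] [Fintype B]
    (K : ι → Matrix C B ℂ) (ρ : Matrix (A × B) (A × B) ℂ) : Matrix (A × C) (A × C) ℂ :=
  Matrix.of fun p q => ∑ i, ∑ b, ∑ b', K i p.2 b * ρ (p.1, b) (q.1, b') * star (K i q.2 b')

/-- Moore–Penrose pseudoinverse of a Hermitian matrix (junk value `0` otherwise). -/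
def pinv {A : Type*} [Fintype A] [DecidableEq A] (M : Matrix A A ℂ) : Matrix A A ℂ :=
  if h : M.IsHermitian then
    (h.eigenvectorUnitary : Matrix A A ℂ) *
      Matrix.diagonal (fun i => ((h.eigenvalues i)⁻¹ : ℂ)) *
      star (h.eigenvectorUnitary : Matrix A A ℂ)
  else 0

/-- Operator norm of a matrix, acting on Euclidean space. -/
def opNorm {A : Type*} [Fintype A] [DecidableEq A] (M : Matrix A A ℂ) : ℝ :=
  ‖Matrix.toEuclideanCLM (𝕜 := ℂ) M‖

/-- The type class `τ(P₀)` of length-`n` words of type `P₀`. -/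
def typeClass {𝓧 : Type*} [Fintype 𝓧] [DecidableEq 𝓧] (n : ℕ) (P0 : 𝓧 → ℝ) :
    Set (Fin n → 𝓧) :=
  {xs | ∀ x, ((Finset.univ.filter fun i => xs i = x).card : ℝ) = n * P0 x}

/-- Holevo capacity of the cq channel `x ↦ Wb x`. -/
def holevoCap {𝓧 B : Type*} [Fintype 𝓧] [Fintype B] [DecidableEq B]
    (Wb : 𝓧 → Matrix B B ℂ) : ℝ :=
  sSup {r : ℝ | ∃ P : 𝓧 → ℝ, (∀ x, 0 ≤ P x) ∧ (∑ x, P x) = 1 ∧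
    r = vN (∑ x, (P x : ℝ) • Wb x) - ∑ x, P x * vN (Wb x)}

end Extras

/-! The smoothing balls are balls in the Bures angle `arccos F̄`, and that angle obeys the
triangle inequality: if `F(ρ₁, ρ) ≥ cos α` and `F(ρ₂, ρ) ≥ cos β` for a normalized `ρ`, then
`F(ρ₁, ρ₂) ≥ cos (α + β)`. To see this, represent `ρ` by the Hilbert–Schmidt vector `√ρ` and `ρᵢ`
by `Vᵢᴴ √ρᵢ`, where `Vᵢ` is the polar factor of `√ρᵢ √ρ`: these vectors have norm at most one,
their overlaps with `√ρ` are exactly the fidelities, and the overlap of the two of them is at most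
`F(ρ₁, ρ₂)`; plane geometry then bounds the angle between them by `α + β`.

Now let `ρ₁ ≤ 2^(-λ) (1 ⊗ σ)` witness `H_min(A|B)_{ρ₁} ≥ λ`. As the square root is operator
monotone, `cos (α + β) ≤ F(ρ₂, ρ₁) ≤ 2^(-λ/2) F(ρ₂, 1 ⊗ σ)`, that is
`λ ≤ H_max(A|B)_{ρ₂} + log₂ (1 / cos² (α + β))` for every `ρ₂` of the `sin β`-ball, and it remains
to take the supremum over `ρ₁` and the infimum over `ρ₂`. -/

open scoped MatrixOrder

section Geometry

open Real

variable {𝕜 E : Type*} [RCLike 𝕜] [SeminormedAddCommGroup E] [InnerProductSpace 𝕜 E]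

lemma norm_sub_smul_sq {u v : E} {f : ℝ} (hu : ‖u‖ = 1) (h : inner 𝕜 u v = (f : 𝕜)) :
    ‖v - (f : 𝕜) • u‖ ^ 2 = ‖v‖ ^ 2 - f ^ 2 := by
  have h' : inner 𝕜 v u = (f : 𝕜) := by rw [← inner_conj_symm, h, RCLike.conj_ofReal]
  rw [@norm_sub_sq 𝕜, inner_smul_right, h', norm_smul, hu, RCLike.norm_ofReal]
  simp only [mul_one, ← RCLike.ofReal_mul, RCLike.ofReal_re, sq_abs]
  ring

lemma norm_sub_smul_le_sin {u v : E} {f θ : ℝ} (hu : ‖u‖ = 1) (hv : ‖v‖ ≤ 1)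
    (h : inner 𝕜 u v = (f : 𝕜)) (hθ : θ ∈ Set.Icc 0 (π / 2)) (hf : cos θ ≤ f) :
    ‖v - (f : 𝕜) • u‖ ≤ sin θ := by
  have hcos := cos_nonneg_of_mem_Icc ⟨by linarith [hθ.1, pi_pos], hθ.2⟩
  have hsin := sin_nonneg_of_nonneg_of_le_pi hθ.1 (by linarith [hθ.2, pi_pos])
  have := norm_sub_smul_sq hu h
  nlinarith [sin_sq_add_cos_sq θ, norm_nonneg (v - (f : 𝕜) • u), norm_nonneg v]

lemma cos_add_le_re_inner {u u₁ u₂ : E} {f₁ f₂ α β : ℝ}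
    (hu : ‖u‖ = 1) (hu₁ : ‖u₁‖ ≤ 1) (hu₂ : ‖u₂‖ ≤ 1)
    (h₁ : inner 𝕜 u u₁ = (f₁ : 𝕜)) (h₂ : inner 𝕜 u u₂ = (f₂ : 𝕜))
    (hα : α ∈ Set.Icc 0 (π / 2)) (hβ : β ∈ Set.Icc 0 (π / 2))
    (hf₁ : cos α ≤ f₁) (hf₂ : cos β ≤ f₂) :
    cos (α + β) ≤ RCLike.re (inner 𝕜 u₁ u₂) := by
  set w₁ := u₁ - (f₁ : 𝕜) • u
  set w₂ := u₂ - (f₂ : 𝕜) • u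
  have huu : inner 𝕜 u u = (1 : 𝕜) := by
    rw [inner_self_eq_norm_sq_to_K, hu, RCLike.ofReal_one, one_pow]
  have h₁' : inner 𝕜 u₁ u = (f₁ : 𝕜) := by rw [← inner_conj_symm, h₁, RCLike.conj_ofReal]
  have hsplit : RCLike.re (inner 𝕜 u₁ u₂) = f₁ * f₂ + RCLike.re (inner 𝕜 w₁ w₂) := by
    simp only [w₁, w₂, inner_sub_left, inner_sub_right, inner_smul_left, inner_smul_right, h₂,
      h₁', huu, RCLike.conj_ofReal, map_sub, mul_one, ← RCLike.ofReal_mul, RCLike.ofReal_re,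
      sub_self, mul_zero, sub_zero]
    ring
  have hCS : -(‖w₁‖ * ‖w₂‖) ≤ RCLike.re (inner 𝕜 w₁ w₂) :=
    neg_le_of_abs_le ((RCLike.abs_re_le_norm _).trans (norm_inner_le_norm _ _))
  have hcα := cos_nonneg_of_mem_Icc ⟨by linarith [hα.1, pi_pos], hα.2⟩
  have hcβ := cos_nonneg_of_mem_Icc ⟨by linarith [hβ.1, pi_pos], hβ.2⟩
  have hsα := sin_nonneg_of_nonneg_of_le_pi hα.1 (by linarith [hα.2, pi_pos])
  rw [hsplit, cos_add]
  nlinarith [mul_le_mul hf₁ hf₂ hcβ (hcα.trans hf₁),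
    mul_le_mul (norm_sub_smul_le_sin hu hu₁ h₁ hα hf₁) (norm_sub_smul_le_sin hu hu₂ h₂ hβ hf₂)
      (norm_nonneg _) hsα]

end Geometry

section MatrixAnalysis

variable {n : Type*} [Fintype n] [DecidableEq n]

lemma matSqrt_eq_sqrt (M : Matrix n n ℂ) : matSqrt M = CFC.sqrt M := by
  by_cases h : M.PosSemidef
  · rw [CFC.sqrt_eq_cfc, cfc_nnreal_eq_real _ M h.nonneg, h.1.cfc_eq, matSqrt, dif_pos h]
    simp only [IsHermitian.cfc, Unitary.conjStarAlgAut_apply]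
    congr 3
    funext i
    simp [Function.comp_def, h.eigenvalues_nonneg i]
  · rw [matSqrt, dif_neg h, CFC.sqrt_of_not_nonneg (by rwa [Matrix.nonneg_iff_posSemidef])]

lemma star_sqrt (M : Matrix n n ℂ) : star (CFC.sqrt M) = CFC.sqrt M :=
  (IsSelfAdjoint.of_nonneg (CFC.sqrt_nonneg M)).star_eq

lemma sqrt_smul {c : ℝ} (hc : 0 ≤ c) {M : Matrix n n ℂ} (hM : 0 ≤ M) :
    CFC.sqrt (c • M) = √c • CFC.sqrt M := by
  rw [CFC.sqrt_eq_iff _ _ (smul_nonneg hc hM)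
      (smul_nonneg (Real.sqrt_nonneg c) (CFC.sqrt_nonneg M)),
    smul_mul_smul_comm, Real.mul_self_sqrt hc, CFC.sqrt_mul_sqrt_self M hM]

lemma trace_cfc {M : Matrix n n ℂ} (hM : M.IsHermitian) (f : ℝ → ℝ) :
    (cfc f M).trace = ∑ i, (f (hM.eigenvalues i) : ℂ) := by
  rw [hM.cfc_eq, IsHermitian.cfc, Unitary.conjStarAlgAut_apply, trace_mul_cycle,
    Unitary.coe_star_mul_self, Matrix.one_mul, trace_diagonal]
  rfl

lemma cfc_mul_cfc (f g : ℝ → ℝ) (M : Matrix n n ℂ) :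
    cfc f M * cfc g M = cfc (fun x => f x * g x) M :=
  (cfc_mul f g M (M.finite_real_spectrum.continuousOn f)
    (M.finite_real_spectrum.continuousOn g)).symm

lemma conjTranspose_cfc (f : ℝ → ℝ) (M : Matrix n n ℂ) : (cfc f M)ᴴ = cfc f M :=
  (cfc_predicate f M).star_eq

lemma cfc_mul_self {M : Matrix n n ℂ} (hM : IsSelfAdjoint M) (f : ℝ → ℝ) :
    cfc f M * M = cfc (fun x => f x * x) M := by
  nth_rewrite 2 [← cfc_id' ℝ M hM]
  exact cfc_mul_cfc _ _ _

lemma abs_eq_cfc (Z : Matrix n n ℂ) : CFC.abs Z = cfc Real.sqrt (Zᴴ * Z) := by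
  rw [CFC.abs, CFC.sqrt_eq_real_sqrt _ (star_mul_self_nonneg Z), cfcₙ_eq_cfc,
    star_eq_conjTranspose]

lemma conjTranspose_mul_cfc_mul (Z : Matrix n n ℂ) (f g : ℝ → ℝ) :
    (Z * cfc f (Zᴴ * Z))ᴴ * (Z * cfc g (Zᴴ * Z)) = cfc (fun x => f x * x * g x) (Zᴴ * Z) := by
  rw [conjTranspose_mul, conjTranspose_cfc, Matrix.mul_assoc, ← Matrix.mul_assoc Zᴴ,
    ← Matrix.mul_assoc, cfc_mul_self (posSemidef_conjTranspose_mul_self Z).1, cfc_mul_cfc]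

/-- Since `(√0)⁻¹ = 0`, the factor `x ↦ (√x)⁻¹` applied to `Zᴴ Z` inverts `|Z|` on its support
and vanishes on the kernel of `Z`. -/
def polarFactor (Z : Matrix n n ℂ) : Matrix n n ℂ :=
  Z * cfc (fun x => (√x)⁻¹) (Zᴴ * Z)

lemma conjTranspose_polarFactor_mul (Z : Matrix n n ℂ) :
    (polarFactor Z)ᴴ * Z = CFC.abs Z := by
  rw [polarFactor, conjTranspose_mul, conjTranspose_cfc, Matrix.mul_assoc,
    cfc_mul_self (posSemidef_conjTranspose_mul_self Z).1, abs_eq_cfc]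
  exact cfc_congr fun x _ => by rw [inv_mul_eq_div, Real.div_sqrt]

lemma conjTranspose_polarFactor_mul_self_le_one (Z : Matrix n n ℂ) :
    (polarFactor Z)ᴴ * polarFactor Z ≤ 1 := by
  rw [polarFactor, conjTranspose_mul_cfc_mul]
  refine cfc_le_one _ _ fun x hx => ?_
  rcases (spectrum_nonneg_of_nonneg (posSemidef_conjTranspose_mul_self Z).nonneg hx).eq_or_lt
    with rfl | hx
  · simp
  · have := Real.sqrt_pos.2 hx
    field_simp
    rw [Real.sq_sqrt hx.le]

lemma polarFactor_mul_abs (Z : Matrix n n ℂ) : polarFactor Z * CFC.abs Z = Z := by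
  have hker : Z * cfc (fun x => 1 - (√x)⁻¹ * √x) (Zᴴ * Z) = 0 := by
    rw [← conjTranspose_mul_self_eq_zero, conjTranspose_mul_cfc_mul]
    refine (cfc_congr fun x hx => ?_).trans (cfc_zero ℝ _)
    rcases (spectrum_nonneg_of_nonneg (posSemidef_conjTranspose_mul_self Z).nonneg hx).eq_or_lt
      with rfl | hx
    · simp
    · simp [inv_mul_cancel₀ (Real.sqrt_pos.2 hx).ne']
  rw [cfc_sub _ _ _ ((Zᴴ * Z).finite_real_spectrum.continuousOn _)
      ((Zᴴ * Z).finite_real_spectrum.continuousOn _),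
    cfc_const_one ℝ (Zᴴ * Z) (IsSelfAdjoint.star_mul_self Z), Matrix.mul_sub, Matrix.mul_one,
    sub_eq_zero, ← cfc_mul_cfc, ← Matrix.mul_assoc, ← abs_eq_cfc] at hker
  exact hker.symm

lemma le_one_of_mul_self_le {P : Matrix n n ℂ} (hP : 0 ≤ P) (h : P * P ≤ P) : P ≤ 1 := by
  have hsa := IsSelfAdjoint.of_nonneg hP
  rw [← cfc_id' ℝ P] at h ⊢
  rw [cfc_mul_cfc, cfc_le_iff _ _ _ (P.finite_real_spectrum.continuousOn _)] at h
  refine cfc_le_one _ _ fun x hx => ?_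
  nlinarith [h x hx, spectrum_nonneg_of_nonneg hP hx]

lemma polarFactor_mul_conjTranspose_self_le_one (Z : Matrix n n ℂ) :
    polarFactor Z * (polarFactor Z)ᴴ ≤ 1 := by
  set V := polarFactor Z
  refine le_one_of_mul_self_le (posSemidef_self_mul_conjTranspose V).nonneg ?_
  have := star_right_conjugate_le_conjugate (conjTranspose_polarFactor_mul_self_le_one Z) V
  rw [star_eq_conjTranspose, Matrix.mul_one] at this
  simpa only [Matrix.mul_assoc] using this

omit [DecidableEq n] in
lemma re_trace_mono {M N : Matrix n n ℂ} (h : M ≤ N) : M.trace.re ≤ N.trace.re := by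
  have := (Matrix.nonneg_iff_posSemidef.1 (sub_nonneg.2 h)).trace_nonneg
  rw [trace_sub, sub_nonneg] at this
  exact (Complex.le_def.1 this).1

omit [DecidableEq n] in
lemma re_trace_nonneg {M : Matrix n n ℂ} (hM : 0 ≤ M) : 0 ≤ M.trace.re := by
  simpa using re_trace_mono hM

lemma re_trace_mul_le_of_le_one {K σ : Matrix n n ℂ} (hK : K ≤ 1) (hσ : 0 ≤ σ) :
    (K * σ).trace.re ≤ σ.trace.re := by
  have h := re_trace_mono (conjugate_le_conjugate_of_nonneg hK (CFC.sqrt_nonneg σ))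
  rwa [Matrix.mul_one, CFC.sqrt_mul_sqrt_self σ hσ, trace_mul_cycle,
    CFC.sqrt_mul_sqrt_self σ hσ, trace_mul_comm] at h

lemma re_trace_mul_le_of_conjTranspose_mul_self_le_one {K P : Matrix n n ℂ}
    (hK : Kᴴ * K ≤ 1) (hP : 0 ≤ P) : (K * P).trace.re ≤ P.trace.re := by
  have h₀ := re_trace_mono (star_right_conjugate_nonneg hP (1 - K))
  have h₁ := re_trace_mul_le_of_le_one hK hP
  have hP' : Pᴴ = P := (IsSelfAdjoint.of_nonneg hP).star_eq
  have hexp : (1 - K) * P * star (1 - K) = P - K * P - (K * P)ᴴ + K * P * Kᴴ := by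
    rw [star_sub, star_one, star_eq_conjTranspose, conjTranspose_mul, hP']
    noncomm_ring
  rw [hexp, trace_add, trace_sub, trace_sub, trace_conjTranspose, trace_mul_cycle K P Kᴴ] at h₀
  simp only [Complex.sub_re, Complex.add_re, Complex.star_def, Complex.conj_re, trace_zero,
    Complex.zero_re] at h₀
  linarith

lemma re_trace_mul_le_trace_abs {C : Matrix n n ℂ} (hC : Cᴴ * C ≤ 1) (Z : Matrix n n ℂ) :
    (C * Z).trace.re ≤ (CFC.abs Z).trace.re := by
  set V := polarFactor Z
  have hCV : (C * V)ᴴ * (C * V) ≤ 1 := by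
    have := star_left_conjugate_le_conjugate hC V
    rw [star_eq_conjTranspose, Matrix.mul_one] at this
    calc (C * V)ᴴ * (C * V) = Vᴴ * (Cᴴ * C) * V := by rw [conjTranspose_mul]; noncomm_ring
      _ ≤ Vᴴ * V := this
      _ ≤ 1 := conjTranspose_polarFactor_mul_self_le_one Z
  have := re_trace_mul_le_of_conjTranspose_mul_self_le_one hCV (CFC.abs_nonneg Z)
  rwa [Matrix.mul_assoc, polarFactor_mul_abs] at this

lemma trace_abs_conjTranspose (Z : Matrix n n ℂ) :
    (CFC.abs Zᴴ).trace = (CFC.abs Z).trace := by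
  have h₁ := posSemidef_self_mul_conjTranspose Z
  have h₂ := posSemidef_conjTranspose_mul_self Z
  have : h₁.1.eigenvalues = h₂.1.eigenvalues :=
    (h₁.1.eigenvalues_eq_eigenvalues_iff h₂.1).2 (charpoly_mul_comm _ _)
  rw [abs_eq_cfc, abs_eq_cfc, conjTranspose_conjTranspose, trace_cfc h₁.1, trace_cfc h₂.1, this]

lemma fid_eq_trace_abs (ρ : Matrix n n ℂ) {σ : Matrix n n ℂ} (hσ : σ.PosSemidef) :
    fid ρ σ = (CFC.abs (CFC.sqrt σ * CFC.sqrt ρ)).trace.re := by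
  have h : CFC.sqrt ρ * CFC.sqrt σ * (CFC.sqrt σ * CFC.sqrt ρ) =
      CFC.sqrt ρ * σ * CFC.sqrt ρ := by
    rw [Matrix.mul_assoc, ← Matrix.mul_assoc (CFC.sqrt σ), CFC.sqrt_mul_sqrt_self σ hσ.nonneg,
      Matrix.mul_assoc]
  rw [fid, matSqrt_eq_sqrt, matSqrt_eq_sqrt, CFC.abs, star_mul, star_sqrt, star_sqrt, h]

lemma fid_nonneg (ρ σ : Matrix n n ℂ) : 0 ≤ fid ρ σ := by
  rw [fid, matSqrt_eq_sqrt]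
  exact re_trace_nonneg (CFC.sqrt_nonneg _)

lemma fid_comm {ρ σ : Matrix n n ℂ} (hρ : ρ.PosSemidef) (hσ : σ.PosSemidef) :
    fid ρ σ = fid σ ρ := by
  rw [fid_eq_trace_abs ρ hσ, fid_eq_trace_abs σ hρ, ← trace_abs_conjTranspose,
    ← star_eq_conjTranspose, star_mul, star_sqrt, star_sqrt]

lemma fid_self {ρ : Matrix n n ℂ} (hρ : ρ.PosSemidef) : fid ρ ρ = ρ.trace.re := by
  have h : CFC.sqrt ρ * ρ * CFC.sqrt ρ = ρ * ρ := by
    set s := CFC.sqrt ρ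
    rw [← CFC.sqrt_mul_sqrt_self ρ hρ.nonneg]
    noncomm_ring
  rw [fid, matSqrt_eq_sqrt, matSqrt_eq_sqrt, h, CFC.sqrt_mul_self ρ hρ.nonneg]

open scoped Matrix.Norms.L2Operator in
lemma fid_mono (ρ : Matrix n n ℂ) {σ σ' : Matrix n n ℂ} (h : σ ≤ σ') :
    fid ρ σ ≤ fid ρ σ' := by
  simp only [fid, matSqrt_eq_sqrt]
  exact re_trace_mono (CFC.sqrt_le_sqrt _ _
    (conjugate_le_conjugate_of_nonneg h (CFC.sqrt_nonneg ρ)))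

lemma fid_smul (ρ : Matrix n n ℂ) {σ : Matrix n n ℂ} (hσ : σ.PosSemidef) {c : ℝ} (hc : 0 ≤ c) :
    fid ρ (c • σ) = √c * fid ρ σ := by
  simp only [fid, matSqrt_eq_sqrt]
  rw [Matrix.mul_smul, Matrix.smul_mul,
    sqrt_smul hc (conjugate_nonneg_of_nonneg hσ.nonneg (CFC.sqrt_nonneg ρ)), trace_smul,
    Complex.smul_re, smul_eq_mul]

/-- `√ρ'` rotated by the polar factor of `√ρ' √ρ`: as in Uhlmann's theorem, its Hilbert–Schmidt
overlap with `√ρ` is the fidelity of `ρ'` and `ρ`. -/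
def alignedSqrt (ρ' ρ : Matrix n n ℂ) : Matrix n n ℂ :=
  (polarFactor (CFC.sqrt ρ' * CFC.sqrt ρ))ᴴ * CFC.sqrt ρ'

lemma trace_alignedSqrt_mul_sqrt {ρ' : Matrix n n ℂ} (hρ' : ρ'.PosSemidef) (ρ : Matrix n n ℂ) :
    (alignedSqrt ρ' ρ * CFC.sqrt ρ).trace = fid ρ ρ' := by
  rw [alignedSqrt, Matrix.mul_assoc, conjTranspose_polarFactor_mul, fid_eq_trace_abs ρ hρ']
  have h : (0 : ℂ) ≤ (CFC.abs (CFC.sqrt ρ' * CFC.sqrt ρ)).trace :=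
    (nonneg_iff_posSemidef.1 (CFC.abs_nonneg _)).trace_nonneg
  exact Complex.eq_re_of_ofReal_le (r := 0) (by simpa using h)

lemma re_trace_alignedSqrt_mul_conjTranspose_self_le {ρ' : Matrix n n ℂ}
    (hρ' : ρ'.PosSemidef) (ρ : Matrix n n ℂ) :
    (alignedSqrt ρ' ρ * (alignedSqrt ρ' ρ)ᴴ).trace.re ≤ ρ'.trace.re := by
  set V := polarFactor (CFC.sqrt ρ' * CFC.sqrt ρ)
  have h : (alignedSqrt ρ' ρ * (alignedSqrt ρ' ρ)ᴴ).trace = (V * Vᴴ * ρ').trace := by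
    rw [alignedSqrt, conjTranspose_mul, conjTranspose_conjTranspose,
      ← star_eq_conjTranspose (CFC.sqrt ρ'), star_sqrt, Matrix.mul_assoc,
      ← Matrix.mul_assoc (CFC.sqrt ρ'), CFC.sqrt_mul_sqrt_self ρ' hρ'.nonneg, trace_mul_comm,
      Matrix.mul_assoc, trace_mul_comm]
  rw [h]
  exact re_trace_mul_le_of_le_one (polarFactor_mul_conjTranspose_self_le_one _) hρ'.nonneg

lemma re_trace_alignedSqrt_mul_conjTranspose_le_fid (ρ₁ : Matrix n n ℂ) {ρ₂ : Matrix n n ℂ}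
    (h₂ : ρ₂.PosSemidef) (ρ : Matrix n n ℂ) :
    (alignedSqrt ρ₂ ρ * (alignedSqrt ρ₁ ρ)ᴴ).trace.re ≤ fid ρ₁ ρ₂ := by
  set V₁ := polarFactor (CFC.sqrt ρ₁ * CFC.sqrt ρ)
  set V₂ := polarFactor (CFC.sqrt ρ₂ * CFC.sqrt ρ)
  have hC : (V₁ * V₂ᴴ)ᴴ * (V₁ * V₂ᴴ) ≤ 1 := by
    have := star_right_conjugate_le_conjugate
      (conjTranspose_polarFactor_mul_self_le_one (CFC.sqrt ρ₁ * CFC.sqrt ρ)) V₂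
    rw [star_eq_conjTranspose, Matrix.mul_one] at this
    calc (V₁ * V₂ᴴ)ᴴ * (V₁ * V₂ᴴ) = V₂ * (V₁ᴴ * V₁) * V₂ᴴ := by
          rw [conjTranspose_mul, conjTranspose_conjTranspose]; noncomm_ring
      _ ≤ V₂ * V₂ᴴ := this
      _ ≤ 1 := polarFactor_mul_conjTranspose_self_le_one _
  have h : alignedSqrt ρ₂ ρ * (alignedSqrt ρ₁ ρ)ᴴ =
      V₂ᴴ * (CFC.sqrt ρ₂ * CFC.sqrt ρ₁) * V₁ := by
    rw [alignedSqrt, alignedSqrt, conjTranspose_mul, conjTranspose_conjTranspose,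
      ← star_eq_conjTranspose (CFC.sqrt ρ₁), star_sqrt]
    noncomm_ring
  rw [h, trace_mul_comm, ← Matrix.mul_assoc, fid_eq_trace_abs ρ₁ h₂]
  exact re_trace_mul_le_trace_abs hC _

omit [DecidableEq n] in
lemma IsState.isSubState {ρ : Matrix n n ℂ} (hρ : IsState ρ) : IsSubState ρ :=
  ⟨hρ.1, by rw [hρ.2, Complex.one_re]⟩

lemma IsSubState.le_one {ρ : Matrix n n ℂ} (hρ : IsSubState ρ) : ρ ≤ 1 := by
  have hH := hρ.1.1
  rw [← cfc_id' ℝ ρ hH.isSelfAdjoint]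
  refine cfc_le_one _ _ fun x hx => ?_
  rw [hH.spectrum_real_eq_range_eigenvalues] at hx
  obtain ⟨i, rfl⟩ := hx
  calc hH.eigenvalues i ≤ ∑ j, hH.eigenvalues j :=
        Finset.single_le_sum (fun j _ => hρ.1.eigenvalues_nonneg j) (Finset.mem_univ i)
    _ = ρ.trace.re := by simp [hH.trace_eq_sum_eigenvalues]
    _ ≤ 1 := hρ.2

lemma pDist_self {ρ : Matrix n n ℂ} (hρ : IsState ρ) : pDist ρ ρ = 0 := by
  simp [pDist, genFid, fid_self hρ.1, hρ.2]

open Real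

lemma cos_le_fid_of_pDist_le_sin (ρ' : Matrix n n ℂ) {ρ : Matrix n n ℂ} (hρ : IsState ρ)
    {θ : ℝ} (hθ : 0 ≤ cos θ) (h : pDist ρ' ρ ≤ sin θ) : cos θ ≤ fid ρ' ρ := by
  rw [pDist, genFid, hρ.2, Complex.one_re, sub_self, mul_zero, sqrt_zero, add_zero,
    sqrt_le_iff] at h
  rw [← pow_le_pow_iff_left₀ hθ (fid_nonneg ρ' ρ) two_ne_zero]
  linarith [sin_sq_add_cos_sq θ, h.2]

lemma cos_add_le_fid {ρ ρ₁ ρ₂ : Matrix n n ℂ} (hρ : IsState ρ) (h₁ : IsSubState ρ₁)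
    (h₂ : IsSubState ρ₂) {α β : ℝ} (hα : α ∈ Set.Icc 0 (π / 2)) (hβ : β ∈ Set.Icc 0 (π / 2))
    (hf₁ : cos α ≤ fid ρ₁ ρ) (hf₂ : cos β ≤ fid ρ₂ ρ) : cos (α + β) ≤ fid ρ₁ ρ₂ := by
  let := (1 : Matrix n n ℂ).toMatrixSeminormedAddCommGroup PosSemidef.one
  let := (1 : Matrix n n ℂ).toMatrixInnerProductSpace PosSemidef.one
  have hinner (X Y : Matrix n n ℂ) : inner ℂ X Y = (Y * Xᴴ).trace := by
    show (Y * 1 * Xᴴ).trace = _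
    rw [Matrix.mul_one]
  have hnorm (X : Matrix n n ℂ) : ‖X‖ ^ 2 = (X * Xᴴ).trace.re := by
    rw [@norm_sq_eq_re_inner ℂ, hinner]
    rfl
  have hu : ‖CFC.sqrt ρ‖ = 1 := by
    have h := hnorm (CFC.sqrt ρ)
    rw [← star_eq_conjTranspose, star_sqrt, CFC.sqrt_mul_sqrt_self ρ hρ.1.nonneg, hρ.2,
      Complex.one_re] at h
    exact (pow_eq_one_iff_of_nonneg (norm_nonneg _) two_ne_zero).1 h
  have hu' {ρ'} (h : IsSubState ρ') : ‖alignedSqrt ρ' ρ‖ ≤ 1 := by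
    have := (hnorm _).trans_le ((re_trace_alignedSqrt_mul_conjTranspose_self_le h.1 ρ).trans h.2)
    exact (pow_le_one_iff_of_nonneg (norm_nonneg _) two_ne_zero).1 this
  have hin {ρ'} (h : IsSubState ρ') :
      inner ℂ (CFC.sqrt ρ) (alignedSqrt ρ' ρ) = (fid ρ' ρ : ℂ) := by
    rw [hinner, ← star_eq_conjTranspose, star_sqrt, trace_alignedSqrt_mul_sqrt h.1,
      fid_comm hρ.1 h.1]
  have h := cos_add_le_re_inner hu (hu' h₁) (hu' h₂) (hin h₁) (hin h₂) hα hβ hf₁ hf₂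
  rw [hinner] at h
  exact h.trans (re_trace_alignedSqrt_mul_conjTranspose_le_fid ρ₁ h₂.1 ρ)

end MatrixAnalysis

section ConditionalEntropy

open Real

variable {A B : Type*} [Fintype A] [DecidableEq A] [Fintype B] [DecidableEq B]

lemma one_kronecker_le_one {σ : Matrix B B ℂ} (hσ : IsSubState σ) :
    (1 : Matrix A A ℂ) ⊗ₖ σ ≤ 1 := by
  have h : (1 : Matrix A A ℂ) ⊗ₖ (1 : Matrix B B ℂ) - 1 ⊗ₖ σ = 1 ⊗ₖ (1 - σ) := by
    rw [sub_eq_iff_eq_add, ← kronecker_add, sub_add_cancel]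
  rw [Matrix.le_iff, ← one_kronecker_one, h]
  exact PosSemidef.one.kronecker hσ.le_one

lemma bddAbove_fid_one_kronecker (ρ : Matrix (A × B) (A × B) ℂ) :
    BddAbove {f : ℝ | ∃ σ : Matrix B B ℂ, IsState σ ∧ f = fid ρ ((1 : Matrix A A ℂ) ⊗ₖ σ)} :=
  ⟨fid ρ 1, by
    rintro _ ⟨σ, hσ, rfl⟩
    exact fid_mono ρ (one_kronecker_le_one hσ.isSubState)⟩

lemma two_mul_logb_le_Hmax {ρ : Matrix (A × B) (A × B) ℂ} {σ : Matrix B B ℂ} (hσ : IsState σ)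
    {x : ℝ} (hx : 0 < x) (h : x ≤ fid ρ ((1 : Matrix A A ℂ) ⊗ₖ σ)) :
    2 * logb 2 x ≤ Hmax ρ := by
  have hsup := h.trans (le_csSup (bddAbove_fid_one_kronecker ρ) ⟨σ, hσ, rfl⟩)
  rw [Hmax]
  exact mul_le_mul_of_nonneg_left (logb_le_logb_of_le one_lt_two hx hsup) zero_le_two

lemma le_Hmax_add_logb {ρ₁ ρ₂ : Matrix (A × B) (A × B) ℂ} (h₁ : ρ₁.PosSemidef)
    (h₂ : ρ₂.PosSemidef) {σ : Matrix B B ℂ} (hσ : IsState σ) {l : ℝ}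
    (hl : LoewnerLE ρ₁ ((2 : ℝ) ^ (-l) • ((1 : Matrix A A ℂ) ⊗ₖ σ))) {c : ℝ} (hc : 0 < c)
    (hcf : c ≤ fid ρ₁ ρ₂) : l ≤ Hmax ρ₂ + logb 2 (1 / c ^ 2) := by
  have hscale : √((2 : ℝ) ^ (-l)) * 2 ^ (l / 2) = 1 := by
    rw [sqrt_eq_rpow, ← rpow_mul zero_le_two, ← rpow_add two_pos]
    ring_nf
    exact rpow_zero 2
  have key : c * 2 ^ (l / 2) ≤ fid ρ₂ ((1 : Matrix A A ℂ) ⊗ₖ σ) :=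
    calc c * 2 ^ (l / 2)
        ≤ fid ρ₂ ((2 : ℝ) ^ (-l) • ((1 : Matrix A A ℂ) ⊗ₖ σ)) * 2 ^ (l / 2) := by
          gcongr
          exact hcf.trans ((fid_comm h₁ h₂).trans_le (fid_mono ρ₂ hl))
      _ = fid ρ₂ ((1 : Matrix A A ℂ) ⊗ₖ σ) := by
          rw [fid_smul ρ₂ (PosSemidef.one.kronecker hσ.1) (rpow_nonneg zero_le_two _),
            mul_comm, ← mul_assoc, mul_comm _ (√_), hscale, one_mul]
  have h := two_mul_logb_le_Hmax hσ (by positivity) key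
  rw [logb_mul hc.ne' (by positivity), logb_rpow two_pos (by norm_num)] at h
  rw [one_div, logb_inv, logb_pow]
  push_cast
  linarith

lemma isState_maximallyMixed [Nonempty B] :
    IsState ((Fintype.card B : ℝ)⁻¹ • (1 : Matrix B B ℂ)) := by
  refine ⟨PosSemidef.one.smul (by positivity), ?_⟩
  rw [trace_smul, trace_one, Complex.real_smul]
  push_cast
  exact inv_mul_cancel₀ (Nat.cast_ne_zero.2 Fintype.card_ne_zero)

lemma Hmin_le_Hmax_add_logb {ρ₁ ρ₂ : Matrix (A × B) (A × B) ℂ} (h₁ : IsSubState ρ₁)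
    (h₂ : ρ₂.PosSemidef) {c : ℝ} (hc : 0 < c) (hcf : c ≤ fid ρ₁ ρ₂) :
    Hmin ρ₁ ≤ Hmax ρ₂ + logb 2 (1 / c ^ 2) := by
  have : Nonempty B := by
    by_contra hB
    rw [not_nonempty_iff] at hB
    exact hc.not_ge (hcf.trans_eq (by simp [fid, Matrix.trace]))
  refine csSup_le ⟨-logb 2 (Fintype.card B), _, isState_maximallyMixed, ?_⟩
    fun l ⟨σ, hσ, hl⟩ => le_Hmax_add_logb h₁.1 h₂ hσ hl hc hcf
  have hN : (0 : ℝ) < Fintype.card B := Nat.cast_pos.2 Fintype.card_pos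
  rw [LoewnerLE, neg_neg, rpow_logb two_pos (by norm_num) hN, kronecker_smul,
    one_kronecker_one, smul_smul, mul_inv_cancel₀ hN.ne', one_smul]
  exact h₁.le_one

end ConditionalEntropy

/-- Smooth min-entropy bounded by smooth max-entropy, exact form. -/
theorem min_le_max_exact {A B : Type*}
    [Fintype A] [DecidableEq A] [Fintype B] [DecidableEq B]
    (ρ : Matrix (A × B) (A × B) ℂ) (hρ : IsState ρ)
    (α β : ℝ) (hα : 0 ≤ α) (hβ : 0 ≤ β) (hab : α + β < Real.pi / 2) :
    sHmin (Real.sin α) ρ ≤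
      sHmax (Real.sin β) ρ + Real.logb 2 (1 / Real.cos (α + β) ^ 2) := by
  have hα' : α ∈ Set.Icc 0 (Real.pi / 2) := ⟨hα, by linarith⟩
  have hβ' : β ∈ Set.Icc 0 (Real.pi / 2) := ⟨hβ, by linarith⟩
  have hsin {θ : ℝ} (hθ : θ ∈ Set.Icc 0 (Real.pi / 2)) : pDist ρ ρ ≤ Real.sin θ :=
    (pDist_self hρ).trans_le
      (Real.sin_nonneg_of_nonneg_of_le_pi hθ.1 (by linarith [hθ.2, Real.pi_pos]))
  have hfid {ρ' : Matrix (A × B) (A × B) ℂ} {θ : ℝ} (hθ : θ ∈ Set.Icc 0 (Real.pi / 2))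
      (h : pDist ρ' ρ ≤ Real.sin θ) : Real.cos θ ≤ fid ρ' ρ :=
    cos_le_fid_of_pDist_le_sin ρ' hρ
      (Real.cos_nonneg_of_mem_Icc ⟨by linarith [hθ.1, Real.pi_pos], hθ.2⟩) h
  refine csSup_le ⟨_, ρ, hρ.isSubState, hsin hα', rfl⟩ ?_
  rintro _ ⟨ρ₁, h₁, hd₁, rfl⟩
  rw [← sub_le_iff_le_add]
  refine le_csInf ⟨_, ρ, hρ.isSubState, hsin hβ', rfl⟩ ?_
  rintro _ ⟨ρ₂, h₂, hd₂, rfl⟩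
  rw [sub_le_iff_le_add]
  exact Hmin_le_Hmax_add_logb h₁ h₂.1 (Real.cos_pos_of_mem_Ioo ⟨by linarith, hab⟩)
    (cos_add_le_fid hρ h₁ h₂ hα' hβ' (hfid hα' hd₁) (hfid hβ' hd₂))

end Paper
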